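/- For every m ≥ 1, the probability that HH has not appeared within the first m tosses equals a_HH(m+3)·(1/2)^m; that is, 1 − ∑_{n=1}^{m} a_HH(n) · (1/2)^n = a_HH(m+3) / 2^m. -/

import Mathlib

/-- The number of binary sequences (lists of Booleans, `true` = H, `false` = T) of
length `n` in which the word `W` appears for the first time exactly at the end:
`W` is a suffix of `l` and `W` does not occur as a contiguous sublist of `l` with
its last entry removed. -/
noncomputable def firstCount (W : List Bool) (n : ℕ) : ℕ :=
  Nat.card {l : List Bool // l.length = n ∧ W <:+ l ∧ ¬ (W <:+: l.dropLast)}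

/-!
Splitting a sequence on its first letters, a sequence of length `n + 3` sees `HH` for the first
time at its end iff it is `T` followed by such a sequence of length `n + 2`, or `HT` followed by
such a sequence of length `n + 1` (a prefix `HH` would be an earlier occurrence). Hence
`a(n + 3) = a(n + 2) + a(n + 1)` with `a(3) = 1`, and for any such Fibonacci-type sequence the
identity `1 - ∑_{n ≤ m} a(n) / 2^n = a(m + 3) / 2^m` follows by induction on `m`, the step being
`a(m + 4) + a(m + 1) = 2 a(m + 3)`.
-/

open List

section ListCount

variable {α : Type*}

theorem nat_card_length_zero (p : List α → Prop) [Decidable (p [])] :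
    Nat.card {l : List α // l.length = 0 ∧ p l} = if p [] then 1 else 0 := by
  split_ifs with h
  · exact Nat.card_eq_one_iff_exists.2 ⟨⟨[], rfl, h⟩, fun ⟨l, hl, _⟩ => by
      simp only [length_eq_zero_iff.1 hl]⟩
  · exact Nat.card_eq_zero.2 (Or.inl ⟨fun ⟨l, hl, hp⟩ => h (length_eq_zero_iff.1 hl ▸ hp)⟩)

theorem nat_card_length_succ [Fintype α] (p : List α → Prop) (n : ℕ) :
    Nat.card {l : List α // l.length = n + 1 ∧ p l}
      = ∑ a : α, Nat.card {l : List α // l.length = n ∧ p (a :: l)} := by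
  have hfin (a : α) : Finite {l : List α // l.length = n ∧ p (a :: l)} :=
    ((List.finite_length_eq α n).subset fun _ h => h.1).to_subtype
  let e : {l : List α // l.length = n + 1 ∧ p l}
      ≃ Σ a : α, {l : List α // l.length = n ∧ p (a :: l)} :=
    { toFun := fun ⟨l, hl⟩ => match l, hl with
        | a :: l, ⟨hlen, hp⟩ => ⟨a, l, Nat.succ.inj hlen, hp⟩
      invFun := fun ⟨a, l, hlen, hp⟩ => ⟨a :: l, congrArg (· + 1) hlen, hp⟩
      left_inv := fun ⟨l, hl⟩ => match l, hl with
        | _ :: _, ⟨_, _⟩ => rfl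
      right_inv := fun ⟨_, _, _, _⟩ => rfl }
  rw [Nat.card_congr e, Nat.card_sigma]

end ListCount

theorem one_sub_sum_div_two_pow_of_add_three (a : ℕ → ℝ) (h3 : a 3 = 1)
    (hrec : ∀ n, a (n + 3) = a (n + 2) + a (n + 1)) (m : ℕ) :
    1 - ∑ n ∈ Finset.Icc 1 m, a n * (1 / 2) ^ n = a (m + 3) / 2 ^ m := by
  induction m with
  | zero => simp [h3]
  | succ m ih =>
    rw [Finset.sum_Icc_succ_top (by omega), ← sub_sub, ih, hrec (m + 1), hrec m, one_div_pow,
      pow_succ]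
    field_simp
    ring

def FirstOccursAtEnd {α : Type*} (W l : List α) : Prop := W <:+ l ∧ ¬ W <:+: l.dropLast

theorem firstCount_eq_nat_card (W : List Bool) (n : ℕ) :
    firstCount W n = Nat.card {l : List Bool // l.length = n ∧ FirstOccursAtEnd W l} := rfl

theorem firstOccursAtEnd_HH_false_cons (l : List Bool) :
    FirstOccursAtEnd [true, true] (false :: l) ↔ FirstOccursAtEnd [true, true] l := by
  cases l <;> simp [FirstOccursAtEnd, suffix_cons_iff, infix_cons_iff]

theorem firstOccursAtEnd_HH_true_false_cons (l : List Bool) :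
    FirstOccursAtEnd [true, true] (true :: false :: l) ↔ FirstOccursAtEnd [true, true] l := by
  cases l <;> simp [FirstOccursAtEnd, suffix_cons_iff, infix_cons_iff]

theorem not_firstOccursAtEnd_HH_true_true_cons {l : List Bool} (hl : l ≠ []) :
    ¬ FirstOccursAtEnd [true, true] (true :: true :: l) := by
  obtain ⟨a, t, rfl⟩ := exists_cons_of_ne_nil hl
  simp [FirstOccursAtEnd, infix_cons_iff]

theorem firstCount_HH_add_three (n : ℕ) :
    firstCount [true, true] (n + 3)
      = firstCount [true, true] (n + 2) + firstCount [true, true] (n + 1) := by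
  have hTT : Nat.card {l : List Bool // l.length = n + 1 ∧
      FirstOccursAtEnd [true, true] (true :: true :: l)} = 0 :=
    Nat.card_eq_zero.2 (Or.inl ⟨fun ⟨_, hlen, h⟩ =>
      not_firstOccursAtEnd_HH_true_true_cons (ne_nil_of_length_eq_add_one hlen) h⟩)
  simp only [firstCount_eq_nat_card, nat_card_length_succ (n := n + 2),
    nat_card_length_succ (n := n + 1) (fun l => FirstOccursAtEnd _ (true :: l)),
    Fintype.sum_bool, hTT, zero_add, firstOccursAtEnd_HH_false_cons,
    firstOccursAtEnd_HH_true_false_cons]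
  exact add_comm _ _

theorem firstCount_HH_three : firstCount [true, true] 3 = 1 := by
  simp only [firstCount, nat_card_length_succ, nat_card_length_zero, Fintype.sum_bool]
  decide

theorem stmt_7 :
    ∀ m : ℕ, 1 ≤ m →
      1 - ∑ n ∈ Finset.Icc 1 m, (firstCount [true, true] n : ℝ) * (1 / 2) ^ n
        = (firstCount [true, true] (m + 3) : ℝ) / 2 ^ m := by
  intro m _
  refine one_sub_sum_div_two_pow_of_add_three _ (by simp [firstCount_HH_three]) (fun n => ?_) m
  exact_mod_cast firstCount_HH_add_three n
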